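/- arXiv:math/0605641 — 2 statements merged into one kernel-verified Lean document; each statement's English description precedes it below -/
import Mathlib

section
/- Let G = (V,E) be a finite graph, β ≥ 0 and h : V → ℝ. Then the Ising measure μ^{β,h} on {-1,+1}^V is monotone; that is, for every s ∈ V and all ξ, ξ' ∈ {-1,+1}^{V∖{s}} with ξ ≤ ξ' coordinatewise, μ^{β,h}(σ(s)=1 | σ ≡ ξ on V∖{s}) ≤ μ^{β,h}(σ(s)=1 | σ ≡ ξ' on V∖{s}). -/
/-!
Ising model on a finite graph. Spin configurations are `σ : V → Bool`, with `true`
standing for spin `+1` and `false` for spin `-1`; `spin` is the corresponding `±1` value.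
Probability measures on the finite configuration space are represented by weight functions.
-/

open Finset

/-- The `±1` value of a spin. -/
def spin (b : Bool) : ℝ := if b then 1 else -1

/-- The conditional probability `μ(σ(s) = +1 | σ ≡ ξ off s)`. -/
noncomputable def condOne {V : Type*} [DecidableEq V] [Fintype V]
    (μ : (V → Bool) → ℝ) (s : V) (ξ : V → Bool) : ℝ :=
  μ (Function.update ξ s true) /
    (μ (Function.update ξ s true) + μ (Function.update ξ s false))

/-- The interaction energy `σ(t)σ(t')` of an (unordered) edge. -/
def edgeTerm {V : Type*} (σ : V → Bool) : Sym2 V → ℝ :=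
  Sym2.lift ⟨fun a b => spin (σ a) * spin (σ b), fun a b => by ring⟩

/-- The Ising Hamiltonian `H(σ) = -β ∑_{{t,t'} ∈ E} σ(t)σ(t') - ∑_t h(t) σ(t)`. -/
noncomputable def isingH {V : Type*} [DecidableEq V] [Fintype V]
    (G : SimpleGraph V) [DecidableRel G.Adj] (β : ℝ) (h : V → ℝ) (σ : V → Bool) : ℝ :=
  -β * ∑ e ∈ G.edgeFinset, edgeTerm σ e - ∑ t : V, h t * spin (σ t)

/-- The Ising measure `μ^{β,h}(σ) = e^{-H(σ)}/Z` on `{-1,+1}^V`. -/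
noncomputable def isingWeight {V : Type*} [DecidableEq V] [Fintype V]
    (G : SimpleGraph V) [DecidableRel G.Adj] (β : ℝ) (h : V → ℝ) (σ : V → Bool) : ℝ :=
  Real.exp (-isingH G β h σ) / ∑ τ : V → Bool, Real.exp (-isingH G β h τ)

/-- `μ` is monotone: the conditional probability of a `+1` at `s` is nondecreasing in the
configuration off `s` (coordinatewise order with `-1 < +1`, i.e. `false < true`). -/
def IsMonotoneWeight {V : Type*} [DecidableEq V] [Fintype V] (μ : (V → Bool) → ℝ) : Prop :=
  ∀ s : V, ∀ ξ ξ' : V → Bool, (∀ t, t ≠ s → ξ t ≤ ξ' t) →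
    condOne μ s ξ ≤ condOne μ s ξ'

/-!
Write `ξ^±` for `ξ` with the spin at `s` set to `±1`. For a Gibbs weight `e^{-H}/Z` the
conditional probability of `+1` at `s` given `ξ` is `(1 + e^{H(ξ^+) - H(ξ^-)})⁻¹`, so the
measure is monotone as soon as the flip cost `H(ξ^+) - H(ξ^-)` is antitone in `ξ`. For the
Ising Hamiltonian the field contributes `-2 h(s)` regardless of `ξ`, and an edge `{s, t}`
contributes `-2 β ξ(t)`, which is antitone in `ξ` because `β ≥ 0`.
-/

open Finset Function

@[simp] lemma spin_true : spin true = 1 := rfl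

@[simp] lemma spin_false : spin false = -1 := rfl

lemma spin_monotone : Monotone spin := by
  intro b b' hb
  cases b <;> cases b' <;> norm_num [spin]
  exact absurd hb (by decide)

section Gibbs

variable {V : Type*} [DecidableEq V] [Fintype V]

lemma condOne_div_const (μ : (V → Bool) → ℝ) {c : ℝ} (hc : c ≠ 0) (s : V) (ξ : V → Bool) :
    condOne (fun σ => μ σ / c) s ξ = condOne μ s ξ := by
  simp only [condOne, ← add_div, div_div_div_cancel_right₀ hc]

lemma condOne_exp_neg (H : (V → Bool) → ℝ) (s : V) (ξ : V → Bool) :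
    condOne (fun σ => Real.exp (-H σ)) s ξ =
      (1 + Real.exp (H (update ξ s true) - H (update ξ s false)))⁻¹ := by
  have hpos := Real.exp_pos (-H (update ξ s true))
  rw [condOne, ← inv_div, add_div, div_self hpos.ne', ← Real.exp_sub]
  ring_nf

theorem isMonotoneWeight_gibbs (H : (V → Bool) → ℝ)
    (hH : ∀ s ξ ξ', (∀ t, t ≠ s → ξ t ≤ ξ' t) →
      H (update ξ' s true) - H (update ξ' s false) ≤ H (update ξ s true) - H (update ξ s false)) :
    IsMonotoneWeight (fun σ => Real.exp (-H σ) / ∑ τ, Real.exp (-H τ)) := by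
  intro s ξ ξ' hle
  have hZ : ∑ τ, Real.exp (-H τ) ≠ 0 :=
    (sum_pos (fun τ _ => Real.exp_pos _) univ_nonempty).ne'
  simp only [condOne_div_const _ hZ, condOne_exp_neg]
  gcongr (1 + Real.exp ?_)⁻¹
  exact hH s ξ ξ' hle

end Gibbs

section Ising

variable {V : Type*} [DecidableEq V]

lemma edgeTerm_update_sub_le {s : V} {ξ ξ' : V → Bool} (hle : ∀ t, t ≠ s → ξ t ≤ ξ' t)
    {e : Sym2 V} (he : ¬e.IsDiag) :
    edgeTerm (update ξ s true) e - edgeTerm (update ξ s false) e ≤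
      edgeTerm (update ξ' s true) e - edgeTerm (update ξ' s false) e := by
  induction e using Sym2.inductionOn with
  | hf a b =>
    have hab : a ≠ b := by simpa using he
    simp only [edgeTerm, Sym2.lift_mk]
    by_cases ha : a = s
    · subst ha
      have hb := spin_monotone (hle b hab.symm)
      simp only [update_self, update_of_ne hab.symm, spin_true, spin_false]
      linarith
    by_cases hb : b = s
    · subst hb
      have ha' := spin_monotone (hle a ha)
      simp only [update_self, update_of_ne ha, spin_true, spin_false]
      linarith
    simp only [update_of_ne ha, update_of_ne hb, sub_self, le_refl]

variable [Fintype V]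

lemma sum_field_update_sub (h : V → ℝ) (s : V) (ξ : V → Bool) :
    ∑ t, h t * spin (update ξ s true t) - ∑ t, h t * spin (update ξ s false t) = 2 * h s := by
  rw [← sum_sub_distrib, sum_eq_single s]
  · simp only [update_self, spin_true, spin_false]
    ring
  · intro t _ ht
    simp only [update_of_ne ht, sub_self]
  · simp

lemma isingH_update_sub_le (G : SimpleGraph V) [DecidableRel G.Adj] {β : ℝ} (hβ : 0 ≤ β)
    (h : V → ℝ) {s : V} {ξ ξ' : V → Bool} (hle : ∀ t, t ≠ s → ξ t ≤ ξ' t) :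
    isingH G β h (update ξ' s true) - isingH G β h (update ξ' s false) ≤
      isingH G β h (update ξ s true) - isingH G β h (update ξ s false) := by
  have hE : ∑ e ∈ G.edgeFinset, edgeTerm (update ξ s true) e -
        ∑ e ∈ G.edgeFinset, edgeTerm (update ξ s false) e ≤
      ∑ e ∈ G.edgeFinset, edgeTerm (update ξ' s true) e -
        ∑ e ∈ G.edgeFinset, edgeTerm (update ξ' s false) e := by
    simp only [← sum_sub_distrib]
    exact sum_le_sum fun e he =>
      edgeTerm_update_sub_le hle (G.not_isDiag_of_mem_edgeSet (G.mem_edgeFinset.mp he))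
  have hF := sum_field_update_sub h s ξ
  have hF' := sum_field_update_sub h s ξ'
  simp only [isingH]
  linarith [mul_le_mul_of_nonneg_left hE hβ]

end Ising

theorem ising_monotone {V : Type*} [DecidableEq V] [Fintype V]
    (G : SimpleGraph V) [DecidableRel G.Adj] (β : ℝ) (hβ : 0 ≤ β) (h : V → ℝ) :
    IsMonotoneWeight (isingWeight G β h) :=
  isMonotoneWeight_gibbs _ fun _ _ _ hle => isingH_update_sub_le G hβ h hle
end

section
/- Fix Δ ∈ ℕ, β ≥ 0 and p ∈ (0,1). (a) There exists h⁺ ∈ ℝ such that for every h ≥ h⁺ and every finite graph G = (V,E) of maximum degree at most Δ, π_p ≼ μ^{β,h}. (b) There exists h⁻ ∈ ℝ such that for every h ≤ h⁻ and every finite graph G = (V,E) of maximum degree at most Δ, μ^{β,h} ≼ π_p. Here μ^{β,h} is the Ising measure on G with constant external field h and π_p is the product measure on {-1,+1}^V under which each site independently takes the value +1 with probability p. -/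
/-!
Ising model on a finite graph. Spin configurations are `σ : V → Bool`, with `true`
standing for spin `+1` and `false` for spin `-1`; `spin` is the corresponding `±1` value.
Probability measures on the finite configuration space are represented by weight functions.
-/

open Finset

/-- Stochastic domination `μ ≼ ν` for weight functions: `∑ f dμ ≤ ∑ f dν` for every
nondecreasing `f` (coordinatewise order, with `false < true`, i.e. `-1 < +1`). -/
def Dominates {V : Type*} [DecidableEq V] [Fintype V] (μ ν : (V → Bool) → ℝ) : Prop :=
  ∀ f : (V → Bool) → ℝ, Monotone f →
    ∑ σ : V → Bool, μ σ * f σ ≤ ∑ σ : V → Bool, ν σ * f σ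

/-- The product measure `π_p` on `{-1,+1}^V`: each site is `+1` (i.e. `true`) with
probability `p`, independently. -/
noncomputable def prodWeight {V : Type*} [Fintype V] (p : ℝ) : (V → Bool) → ℝ := fun σ =>
  ∏ v : V, if σ v then p else 1 - p

/-!
Resampling site `s` from its `π_p`-marginal, `f ↦ p f(ξ^{s,+}) + (1-p) f(ξ^{s,-})`, preserves
monotonicity, and if every single-site conditional probability of `+1` under `ν` is at least `p`
it can only decrease `∑ ν f` for nondecreasing `f`. Resampling every site in turn turns `f` into
the constant `∑ π_p f`, whence `π_p ≼ ν`; symmetrically `ν ≼ π_p` when those conditional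
probabilities are at most `p`. For the Ising measure the conditional log-odds of `+1` at a site
are `2h` up to an interaction term of absolute value at most `2βΔ`, so they exceed
`log (p / (1 - p))` for `h` large and fall below it for `h` very negative.
-/

open Function

section Resampling

variable {V : Type*} [DecidableEq V]

noncomputable def resampleAt (p : ℝ) (s : V) (f : (V → Bool) → ℝ) : (V → Bool) → ℝ :=
  fun ξ => p * f (update ξ s true) + (1 - p) * f (update ξ s false)

noncomputable def resample (p : ℝ) (l : List V) (f : (V → Bool) → ℝ) : (V → Bool) → ℝ :=
  l.foldr (resampleAt p) f

@[simp] lemma resample_cons (p : ℝ) (s : V) (l : List V) (f : (V → Bool) → ℝ) :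
    resample p (s :: l) f = resampleAt p s (resample p l f) := rfl

lemma monotone_resampleAt {p : ℝ} (hp0 : 0 ≤ p) (hp1 : p ≤ 1) (s : V) {f : (V → Bool) → ℝ}
    (hf : Monotone f) : Monotone (resampleAt p s f) := by
  intro ξ η hle
  have hle_update (b : Bool) : update ξ s b ≤ update η s b :=
    update_le_update_iff.mpr ⟨le_rfl, fun j _ => hle j⟩
  have := mul_le_mul_of_nonneg_left (hf (hle_update true)) hp0
  have := mul_le_mul_of_nonneg_left (hf (hle_update false)) (sub_nonneg.mpr hp1)
  simp only [resampleAt]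
  linarith

lemma monotone_resample {p : ℝ} (hp0 : 0 ≤ p) (hp1 : p ≤ 1) (l : List V)
    {f : (V → Bool) → ℝ} (hf : Monotone f) : Monotone (resample p l f) := by
  induction l with
  | nil => exact hf
  | cons s l ih => exact monotone_resampleAt hp0 hp1 s ih

lemma resample_congr (p : ℝ) (l : List V) (f : (V → Bool) → ℝ) {ξ η : V → Bool}
    (h : ∀ v ∉ l, ξ v = η v) : resample p l f ξ = resample p l f η := by
  induction l generalizing ξ η with
  | nil => rw [funext fun v => h v List.not_mem_nil]
  | cons s l ih =>
    have h_update (b : Bool) : ∀ v ∉ l, update ξ s b v = update η s b v := by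
      intro v hv
      by_cases hvs : v = s
      · subst hvs; simp
      · simp only [update_of_ne hvs]
        exact h v (by simp [hvs, hv])
    simp only [resample_cons, resampleAt, ih (h_update true), ih (h_update false)]

/- `CondOneGE p ν` and `CondOneLE p ν` say `p ≤ condOne ν s ξ`, resp. `condOne ν s ξ ≤ p`, for
all `s` and `ξ`, with the denominator cleared so that no positivity of `ν` is needed. -/

def CondOneGE (p : ℝ) (ν : (V → Bool) → ℝ) : Prop :=
  ∀ (s : V) (ξ : V → Bool), p * (ν (update ξ s true) + ν (update ξ s false)) ≤ ν (update ξ s true)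

def CondOneLE (p : ℝ) (ν : (V → Bool) → ℝ) : Prop :=
  ∀ (s : V) (ξ : V → Bool), ν (update ξ s true) ≤ p * (ν (update ξ s true) + ν (update ξ s false))

variable [Fintype V]

lemma two_mul_sum_eq_sum_update (s : V) (F : (V → Bool) → ℝ) :
    2 * ∑ σ, F σ = ∑ σ, (F (update σ s true) + F (update σ s false)) := by
  have hflip : Involutive fun σ : V → Bool => update σ s (!σ s) := by
    intro σ; simp
  have hpair (σ : V → Bool) :
      F (update σ s true) + F (update σ s false) = F σ + F (update σ s (!σ s)) := by
    cases hσ : σ s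
    · have hfix : update σ s false = σ := update_eq_self_iff.mpr hσ.symm
      rw [hfix, add_comm, Bool.not_false]
    · have hfix : update σ s true = σ := update_eq_self_iff.mpr hσ.symm
      rw [hfix, Bool.not_true]
  rw [sum_congr rfl fun σ _ => hpair σ, sum_add_distrib, two_mul]
  exact congrArg _ (Equiv.sum_comp hflip.toPerm F).symm

lemma two_mul_sum_mul_resampleAt_sub (p : ℝ) (ν f : (V → Bool) → ℝ) (s : V) :
    2 * (∑ σ, ν σ * resampleAt p s f σ - ∑ σ, ν σ * f σ) =
      ∑ σ, (f (update σ s true) - f (update σ s false)) *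
        (p * (ν (update σ s true) + ν (update σ s false)) - ν (update σ s true)) := by
  rw [mul_sub, two_mul_sum_eq_sum_update s, two_mul_sum_eq_sum_update s, ← sum_sub_distrib]
  refine sum_congr rfl fun σ _ => ?_
  simp only [resampleAt, update_idem]
  ring

lemma sum_mul_resampleAt_le {p : ℝ} {ν f : (V → Bool) → ℝ} (hν : CondOneGE p ν)
    (hf : Monotone f) (s : V) : ∑ σ, ν σ * resampleAt p s f σ ≤ ∑ σ, ν σ * f σ := by
  have hterms := two_mul_sum_mul_resampleAt_sub p ν f s
  have : ∑ σ, (f (update σ s true) - f (update σ s false)) *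
      (p * (ν (update σ s true) + ν (update σ s false)) - ν (update σ s true)) ≤ 0 :=
    sum_nonpos fun σ _ => mul_nonpos_of_nonneg_of_nonpos
      (sub_nonneg.mpr (hf (update_le_update_iff'.mpr (Bool.false_le true))))
      (sub_nonpos.mpr (hν s σ))
  linarith

lemma sum_mul_le_sum_mul_resampleAt {p : ℝ} {ν f : (V → Bool) → ℝ} (hν : CondOneLE p ν)
    (hf : Monotone f) (s : V) : ∑ σ, ν σ * f σ ≤ ∑ σ, ν σ * resampleAt p s f σ := by
  have hterms := two_mul_sum_mul_resampleAt_sub p ν f s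
  have : 0 ≤ ∑ σ, (f (update σ s true) - f (update σ s false)) *
      (p * (ν (update σ s true) + ν (update σ s false)) - ν (update σ s true)) :=
    sum_nonneg fun σ _ => mul_nonneg
      (sub_nonneg.mpr (hf (update_le_update_iff'.mpr (Bool.false_le true))))
      (sub_nonneg.mpr (hν s σ))
  linarith

lemma sum_mul_resample_le {p : ℝ} (hp0 : 0 ≤ p) (hp1 : p ≤ 1) {ν f : (V → Bool) → ℝ}
    (hν : CondOneGE p ν) (hf : Monotone f) (l : List V) :
    ∑ σ, ν σ * resample p l f σ ≤ ∑ σ, ν σ * f σ := by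
  induction l with
  | nil => rfl
  | cons s l ih =>
    exact (sum_mul_resampleAt_le hν (monotone_resample hp0 hp1 l hf) s).trans ih

lemma sum_mul_le_sum_mul_resample {p : ℝ} (hp0 : 0 ≤ p) (hp1 : p ≤ 1) {ν f : (V → Bool) → ℝ}
    (hν : CondOneLE p ν) (hf : Monotone f) (l : List V) :
    ∑ σ, ν σ * f σ ≤ ∑ σ, ν σ * resample p l f σ := by
  induction l with
  | nil => rfl
  | cons s l ih =>
    exact ih.trans (sum_mul_le_sum_mul_resampleAt hν (monotone_resample hp0 hp1 l hf) s)

lemma sum_mul_resample_univ {ν : (V → Bool) → ℝ} (hν : ∑ σ, ν σ = 1) (p : ℝ)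
    (f : (V → Bool) → ℝ) (ξ : V → Bool) :
    ∑ σ, ν σ * resample p univ.toList f σ = resample p univ.toList f ξ := by
  have hconst (σ : V → Bool) : resample p univ.toList f σ = resample p univ.toList f ξ :=
    resample_congr p _ f fun v hv => absurd (mem_toList.mpr (mem_univ v)) hv
  simp only [hconst, ← sum_mul, hν, one_mul]

end Resampling

section ProductMeasure

variable {V : Type*} [DecidableEq V] [Fintype V]

lemma prodWeight_update (p : ℝ) (ξ : V → Bool) (s : V) (b : Bool) :
    prodWeight p (update ξ s b) =
      (if b then p else 1 - p) * ∏ v ∈ univ.erase s, (if ξ v then p else 1 - p) := by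
  rw [prodWeight, ← mul_prod_erase univ _ (mem_univ s), update_self]
  congr 1
  exact prod_congr rfl fun v hv => by rw [update_of_ne (ne_of_mem_erase hv)]

lemma prodWeight_condOne (p : ℝ) (s : V) (ξ : V → Bool) :
    p * (prodWeight p (update ξ s true) + prodWeight p (update ξ s false)) =
      prodWeight p (update ξ s true) := by
  simp only [prodWeight_update, Bool.false_eq_true, if_true, if_false]
  ring

lemma sum_prodWeight (p : ℝ) : ∑ σ : V → Bool, prodWeight p σ = 1 := by
  simp only [prodWeight]
  rw [← Fintype.prod_sum fun (_ : V) (b : Bool) => if b = true then p else 1 - p]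
  simp

lemma sum_prodWeight_mul_eq_resample {p : ℝ} (hp0 : 0 ≤ p) (hp1 : p ≤ 1)
    {f : (V → Bool) → ℝ} (hf : Monotone f) (ξ : V → Bool) :
    ∑ σ, prodWeight p σ * f σ = resample p univ.toList f ξ := by
  rw [← sum_mul_resample_univ (sum_prodWeight p) p f ξ]
  exact le_antisymm
    (sum_mul_le_sum_mul_resample hp0 hp1 (fun s ξ => (prodWeight_condOne p s ξ).ge) hf _)
    (sum_mul_resample_le hp0 hp1 (fun s ξ => (prodWeight_condOne p s ξ).le) hf _)

theorem dominates_prodWeight_left_of_condOneGE {p : ℝ} (hp0 : 0 ≤ p) (hp1 : p ≤ 1)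
    {ν : (V → Bool) → ℝ} (hν1 : ∑ σ, ν σ = 1) (hν : CondOneGE p ν) :
    Dominates (prodWeight p) ν := fun f hf => by
  rw [sum_prodWeight_mul_eq_resample hp0 hp1 hf (fun _ => false),
    ← sum_mul_resample_univ hν1 p f]
  exact sum_mul_resample_le hp0 hp1 hν hf _

theorem dominates_prodWeight_right_of_condOneLE {p : ℝ} (hp0 : 0 ≤ p) (hp1 : p ≤ 1)
    {ν : (V → Bool) → ℝ} (hν1 : ∑ σ, ν σ = 1) (hν : CondOneLE p ν) :
    Dominates ν (prodWeight p) := fun f hf => by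
  rw [sum_prodWeight_mul_eq_resample hp0 hp1 hf (fun _ => false),
    ← sum_mul_resample_univ hν1 p f]
  exact sum_mul_le_sum_mul_resample hp0 hp1 hν hf _

end ProductMeasure

section LogOdds

open Real

variable {p : ℝ}

lemma mul_exp_add_exp_le_exp (hp : p ∈ Set.Ioo (0 : ℝ) 1) {A B : ℝ}
    (h : log p - log (1 - p) ≤ A - B) : p * (exp A + exp B) ≤ exp A := by
  have hcross : p * exp B ≤ (1 - p) * exp A := by
    have := exp_le_exp.mpr (show log p + B ≤ log (1 - p) + A by linarith)
    rwa [exp_add, exp_add, exp_log hp.1, exp_log (sub_pos.mpr hp.2)] at this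
  linarith

lemma exp_le_mul_exp_add_exp (hp : p ∈ Set.Ioo (0 : ℝ) 1) {A B : ℝ}
    (h : A - B ≤ log p - log (1 - p)) : exp A ≤ p * (exp A + exp B) := by
  have hcross : (1 - p) * exp A ≤ p * exp B := by
    have := exp_le_exp.mpr (show log (1 - p) + A ≤ log p + B by linarith)
    rwa [exp_add, exp_add, exp_log hp.1, exp_log (sub_pos.mpr hp.2)] at this
  linarith

end LogOdds

section Ising

open Real

variable {V : Type*}

lemma abs_edgeTerm_le_one (σ : V → Bool) (e : Sym2 V) : |edgeTerm σ e| ≤ 1 := by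
  induction e using Sym2.ind with
  | _ a b =>
    simp only [edgeTerm, Sym2.lift_mk]
    cases σ a <;> cases σ b <;> norm_num [spin]

variable [DecidableEq V]

lemma edgeTerm_update_of_notMem {s : V} {e : Sym2 V} (hs : s ∉ e) (ξ : V → Bool) (b : Bool) :
    edgeTerm (update ξ s b) e = edgeTerm ξ e := by
  induction e using Sym2.ind with
  | _ a c =>
    obtain ⟨hsa, hsc⟩ : s ≠ a ∧ s ≠ c := by simpa [Sym2.mem_iff, not_or] using hs
    simp only [edgeTerm, Sym2.lift_mk, update_of_ne hsa.symm, update_of_ne hsc.symm]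

variable [Fintype V] (G : SimpleGraph V) [DecidableRel G.Adj]

lemma abs_sum_edgeTerm_update_sub_le (s : V) (ξ : V → Bool) :
    |∑ e ∈ G.edgeFinset, (edgeTerm (update ξ s true) e - edgeTerm (update ξ s false) e)| ≤
      2 * G.degree s := by
  rw [← sum_filter_of_ne fun e _ hne => by_contra fun hs => hne (by
      rw [edgeTerm_update_of_notMem hs, edgeTerm_update_of_notMem hs, sub_self]),
    ← G.incidenceFinset_eq_filter, ← G.card_incidenceFinset_eq_degree, mul_comm, ← nsmul_eq_mul]
  refine (abs_sum_le_sum_abs _ _).trans (sum_le_card_nsmul _ _ _ fun e _ => ?_)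
  have h₁ := abs_edgeTerm_le_one (update ξ s true) e
  have h₂ := abs_edgeTerm_le_one (update ξ s false) e
  linarith [abs_sub (edgeTerm (update ξ s true) e) (edgeTerm (update ξ s false) e)]

lemma neg_isingH_update_sub (β h : ℝ) (s : V) (ξ : V → Bool) :
    -isingH G β (fun _ => h) (update ξ s true) - -isingH G β (fun _ => h) (update ξ s false) =
      β * ∑ e ∈ G.edgeFinset, (edgeTerm (update ξ s true) e - edgeTerm (update ξ s false) e) +
        2 * h := by
  have hfield : ∑ t, h * spin (update ξ s true t) - ∑ t, h * spin (update ξ s false t) =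
      2 * h := by
    rw [← sum_sub_distrib, Fintype.sum_eq_single s fun t ht => by simp [update_of_ne ht]]
    norm_num [spin]
    ring
  rw [isingH, isingH, sum_sub_distrib]
  linear_combination hfield

lemma abs_neg_isingH_update_sub_sub_le {β : ℝ} (hβ : 0 ≤ β) (h : ℝ) (s : V) (ξ : V → Bool) :
    |-isingH G β (fun _ => h) (update ξ s true) - -isingH G β (fun _ => h) (update ξ s false) -
      2 * h| ≤ 2 * β * G.degree s := by
  rw [neg_isingH_update_sub, add_sub_cancel_right, abs_mul, abs_of_nonneg hβ]
  linarith [mul_le_mul_of_nonneg_left (abs_sum_edgeTerm_update_sub_le G s ξ) hβ]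

lemma sum_exp_neg_isingH_pos (β : ℝ) (h : V → ℝ) :
    0 < ∑ τ : V → Bool, exp (-isingH G β h τ) :=
  sum_pos (fun _ _ => exp_pos _) univ_nonempty

lemma sum_isingWeight (β : ℝ) (h : V → ℝ) : ∑ σ, isingWeight G β h σ = 1 := by
  simp only [isingWeight, ← sum_div]
  exact div_self (sum_exp_neg_isingH_pos G β h).ne'

lemma condOneGE_isingWeight {Δ : ℕ} {β p h : ℝ} (hβ : 0 ≤ β) (hp : p ∈ Set.Ioo (0 : ℝ) 1)
    (hdeg : ∀ v : V, G.degree v ≤ Δ) (hh : log p - log (1 - p) + 2 * β * Δ ≤ 2 * h) :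
    CondOneGE p (isingWeight G β fun _ => h) := by
  intro s ξ
  have hE := abs_le.mp (abs_neg_isingH_update_sub_sub_le G hβ h s ξ)
  have hΔ : 2 * β * G.degree s ≤ 2 * β * Δ :=
    mul_le_mul_of_nonneg_left (by exact_mod_cast hdeg s) (by positivity)
  simp only [isingWeight, ← add_div, ← mul_div_assoc]
  rw [div_le_div_iff_of_pos_right (sum_exp_neg_isingH_pos G β _)]
  exact mul_exp_add_exp_le_exp hp (by linarith)

lemma condOneLE_isingWeight {Δ : ℕ} {β p h : ℝ} (hβ : 0 ≤ β) (hp : p ∈ Set.Ioo (0 : ℝ) 1)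
    (hdeg : ∀ v : V, G.degree v ≤ Δ) (hh : 2 * h + 2 * β * Δ ≤ log p - log (1 - p)) :
    CondOneLE p (isingWeight G β fun _ => h) := by
  intro s ξ
  have hE := abs_le.mp (abs_neg_isingH_update_sub_sub_le G hβ h s ξ)
  have hΔ : 2 * β * G.degree s ≤ 2 * β * Δ :=
    mul_le_mul_of_nonneg_left (by exact_mod_cast hdeg s) (by positivity)
  simp only [isingWeight, ← add_div, ← mul_div_assoc]
  rw [div_le_div_iff_of_pos_right (sum_exp_neg_isingH_pos G β _)]
  exact exp_le_mul_exp_add_exp hp (by linarith)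

end Ising

theorem ising_large_field_domination (Δ : ℕ) (β : ℝ) (hβ : 0 ≤ β) (p : ℝ)
    (hp : p ∈ Set.Ioo (0 : ℝ) 1) :
    (∃ hplus : ℝ, ∀ h : ℝ, hplus ≤ h → ∀ (V : Type) [DecidableEq V] [Fintype V]
        (G : SimpleGraph V) [DecidableRel G.Adj], (∀ v : V, G.degree v ≤ Δ) →
          Dominates (prodWeight p) (isingWeight G β fun _ => h)) ∧
    (∃ hminus : ℝ, ∀ h : ℝ, h ≤ hminus → ∀ (V : Type) [DecidableEq V] [Fintype V]
        (G : SimpleGraph V) [DecidableRel G.Adj], (∀ v : V, G.degree v ≤ Δ) →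
          Dominates (isingWeight G β fun _ => h) (prodWeight p)) := by
  have hp0 : 0 ≤ p := hp.1.le
  have hp1 : p ≤ 1 := hp.2.le
  set logOdds := Real.log p - Real.log (1 - p)
  constructor
  · refine ⟨logOdds / 2 + β * Δ, fun h hh V _ _ G _ hdeg => ?_⟩
    exact dominates_prodWeight_left_of_condOneGE hp0 hp1 (sum_isingWeight G β _)
      (condOneGE_isingWeight G hβ hp hdeg (by linarith))
  · refine ⟨logOdds / 2 - β * Δ, fun h hh V _ _ G _ hdeg => ?_⟩
    exact dominates_prodWeight_right_of_condOneLE hp0 hp1 (sum_isingWeight G β _)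
      (condOneLE_isingWeight G hβ hp hdeg (by linarith))
end
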